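/- There exists a compact set Ω ⊂ ℝ² which is the support of a polyhedral complex and which is star shaped (with respect to the origin) but not polyhedrally star shaped. Concretely, Ω = [−1,1]×[−1,1] ∪ {0}×[1,2] ∪ [1,2]×{0} is star shaped with centre (0,0), but there is no polyhedral complex 𝒟 with Ω open in |𝒟| such that σ ∩ Ω is star shaped with centre (0,0) for all maximal σ ∈ 𝒟. -/

import Mathlib

open Set

noncomputable section

abbrev Vec (r : ℕ) : Type := Fin r → ℝ

/-- A (convex) polyhedron in `ℝ^r`: a finite intersection of closed half-spaces. -/
def IsPolyhedron {r : ℕ} (σ : Set (Vec r)) : Prop :=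
  ∃ (n : ℕ) (f : Fin n → (Vec r →ₗ[ℝ] ℝ)) (c : Fin n → ℝ),
    σ = {x | ∀ i, f i x ≤ c i}

/-- `τ` is a face of `σ`: either `σ` itself, or the subset of `σ` where a linear
functional bounded above on `σ` attains a given bound. -/
def IsFaceOf {r : ℕ} (τ σ : Set (Vec r)) : Prop :=
  τ = σ ∨ ∃ (g : Vec r →ₗ[ℝ] ℝ) (c : ℝ),
    (∀ x ∈ σ, g x ≤ c) ∧ τ = {x ∈ σ | g x = c}

/-- A polyhedral complex in `ℝ^r`: a finite set of convex polyhedra, closed under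
taking faces, such that the intersection of any two members is a face of both. -/
structure PolyComplex (r : ℕ) where
  polys : Set (Set (Vec r))
  finite : polys.Finite
  poly_mem : ∀ σ ∈ polys, IsPolyhedron σ
  face_mem : ∀ σ ∈ polys, ∀ τ, IsFaceOf τ σ → τ ∈ polys
  inter_face : ∀ σ ∈ polys, ∀ τ ∈ polys, IsFaceOf (σ ∩ τ) σ

/-- The support of a polyhedral complex. -/
def PolyComplex.support {r : ℕ} (C : PolyComplex r) : Set (Vec r) :=
  ⋃ σ ∈ C.polys, σ

/-- The relative interior of a polyhedron: the polyhedron minus all its proper faces. -/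
def relint {r : ℕ} (σ : Set (Vec r)) : Set (Vec r) :=
  {x ∈ σ | ∀ τ, IsFaceOf τ σ → τ ≠ σ → x ∉ τ}

/-- The polyhedral star of `σ` in `C`: the union of the relative interiors of all
members of `C` having `σ` as a face. -/
def polyStar {r : ℕ} (C : PolyComplex r) (σ : Set (Vec r)) : Set (Vec r) :=
  ⋃ τ ∈ {τ ∈ C.polys | IsFaceOf σ τ}, relint τ

/-- `Ω` is an open subset of the support of `C` (subspace topology). -/
def OpenInSupport {r : ℕ} (C : PolyComplex r) (Ω : Set (Vec r)) : Prop :=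
  ∃ U : Set (Vec r), IsOpen U ∧ Ω = U ∩ C.support

/-- `S` is star shaped with centre `z`. -/
def StarShapedWith {r : ℕ} (z : Vec r) (S : Set (Vec r)) : Prop :=
  ∀ x ∈ S, ∀ t ∈ Icc (0 : ℝ) 1, z + t • (x - z) ∈ S

/-- `Ω` is polyhedrally star shaped with centre `z`: there is a polyhedral complex `D`
such that `Ω` is an open subset of `|D|` and `σ ∩ Ω` is star shaped with centre `z`
for every maximal `σ ∈ D`. -/
def PolyStarShaped {r : ℕ} (z : Vec r) (Ω : Set (Vec r)) : Prop :=
  ∃ D : PolyComplex r, OpenInSupport D Ω ∧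
    ∀ σ ∈ D.polys, (∀ τ ∈ D.polys, IsFaceOf σ τ → τ = σ) →
      StarShapedWith z (σ ∩ Ω)

/-!
`Ω` is star shaped with centre `0` by inspection, and it is the support of the complex made of
the four unit squares of `[-1, 1]²`, the two spikes, and their faces; for lattice boxes the
axioms of a polyhedral complex reduce to finitely many comparisons of integers.

Suppose a complex `D` witnessed polyhedral star-shapedness. Since `Ω` is open in `|D|`, near the
tip `(0, 2)` the support of `D` is the vertical spike, so every (convex) cell through the tip
lies on the axis `x₀ = 0`. A maximal cell `σ` through the tip contains `0` and `(0, 1)` by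
star-shapedness. As finitely many closed cells cover the top edge `(0, 1] × {1}`, some maximal
cell `ρ` contains `(0, 1)` and a point `(s, 1)` with `s > 0`; star-shapedness puts `0` into `ρ`.
Now `σ ∩ ρ` is a face of `σ` containing `0` and `(0, 1)`, hence all of the segment `σ`. So `ρ`
contains the tip and lies on the axis, contradicting `(s, 1) ∈ ρ`.
-/

open Filter Topology

section General

variable {r : ℕ}

theorem isFaceOf_empty (σ : Set (Vec r)) : IsFaceOf ∅ σ :=
  Or.inr ⟨0, 1, fun _ _ => zero_le_one, by ext; simp⟩

theorem IsFaceOf.subset {τ σ : Set (Vec r)} (h : IsFaceOf τ σ) : τ ⊆ σ := by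
  rcases h with rfl | ⟨g, c, -, rfl⟩
  exacts [subset_rfl, sep_subset _ _]

/-- The defining equation of a face persists on its affine span. -/
theorem IsFaceOf.eq_of_subset_affineSpan {τ σ : Set (Vec r)} (h : IsFaceOf τ σ)
    (hσ : σ ⊆ affineSpan ℝ τ) : τ = σ := by
  rcases h with h | ⟨g, c, -, rfl⟩
  · exact h
  let level : AffineSubspace ℝ (Vec r) :=
    (AffineSubspace.mk' c ⊥).comap g.toAffineMap
  have hlevel : affineSpan ℝ {x ∈ σ | g x = c} ≤ level :=
    affineSpan_le.mpr fun x hx => by simp [level, hx.2]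
  refine (sep_subset _ _).antisymm fun x hx => ⟨hx, ?_⟩
  simpa [level, sub_eq_zero] using hlevel (hσ hx)

theorem IsPolyhedron.eq_iInter {σ : Set (Vec r)} (h : IsPolyhedron σ) :
    ∃ (n : ℕ) (f : Fin n → (Vec r →ₗ[ℝ] ℝ)) (c : Fin n → ℝ), σ = ⋂ i, {x | f i x ≤ c i} := by
  obtain ⟨n, f, c, rfl⟩ := h
  exact ⟨n, f, c, by ext; simp⟩

theorem IsPolyhedron.convex {σ : Set (Vec r)} (h : IsPolyhedron σ) : Convex ℝ σ := by
  obtain ⟨n, f, c, rfl⟩ := h.eq_iInter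
  exact convex_iInter fun i => convex_halfSpace_le (f i).isLinear (c i)

theorem IsPolyhedron.isClosed {σ : Set (Vec r)} (h : IsPolyhedron σ) : IsClosed σ := by
  obtain ⟨n, f, c, rfl⟩ := h.eq_iInter
  exact isClosed_iInter fun i => isClosed_le (f i).continuous_of_finiteDimensional continuous_const

theorem isPolyhedron_empty : IsPolyhedron (∅ : Set (Vec r)) :=
  ⟨1, ![0], ![-1], by ext; simp⟩

theorem PolyComplex.isClosed_support (D : PolyComplex r) : IsClosed D.support :=
  D.finite.isClosed_biUnion fun σ hσ => (D.poly_mem σ hσ).isClosed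

def PolyComplex.IsMaximal (D : PolyComplex r) (σ : Set (Vec r)) : Prop :=
  σ ∈ D.polys ∧ ∀ τ ∈ D.polys, IsFaceOf σ τ → τ = σ

theorem PolyComplex.exists_isMaximal_mem (D : PolyComplex r) {p : Vec r} (hp : p ∈ D.support) :
    ∃ σ, D.IsMaximal σ ∧ p ∈ σ := by
  have hne : {σ ∈ D.polys | p ∈ σ}.Nonempty := by
    simpa [PolyComplex.support, Set.Nonempty] using hp
  obtain ⟨σ, ⟨hσ, hpσ⟩, hmax⟩ :=
    (D.finite.subset (sep_subset _ _)).exists_maximalFor id _ hne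
  refine ⟨σ, ⟨hσ, fun τ hτ hface => ?_⟩, hpσ⟩
  exact (hface.subset.antisymm (hmax ⟨hτ, hface.subset hpσ⟩ hface.subset)).symm

/-- Pigeonhole over the finitely many closed maximal cells covering `A`. -/
theorem PolyComplex.exists_isMaximal_mem_of_mem_closure (D : PolyComplex r) {A : Set (Vec r)}
    (hA : A ⊆ D.support) {p : Vec r} (hp : p ∈ closure A) :
    ∃ σ, D.IsMaximal σ ∧ p ∈ σ ∧ (σ ∩ A).Nonempty := by
  have hfin : {σ | D.IsMaximal σ}.Finite := D.finite.subset fun σ hσ => hσ.1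
  have hcover : A = ⋃ σ ∈ {σ | D.IsMaximal σ}, σ ∩ A := by
    refine (subset_antisymm (fun x hx => ?_) (iUnion₂_subset fun σ _ => inter_subset_right))
    obtain ⟨σ, hσ, hxσ⟩ := D.exists_isMaximal_mem (hA hx)
    exact mem_biUnion hσ ⟨hxσ, hx⟩
  rw [hcover, hfin.closure_biUnion, mem_iUnion₂] at hp
  obtain ⟨σ, hσ, hpσ⟩ := hp
  have hclosed : IsClosed σ := (D.poly_mem σ hσ.1).isClosed
  exact ⟨σ, hσ, closure_minimal inter_subset_left hclosed hpσ,
    closure_nonempty_iff.mp ⟨p, hpσ⟩⟩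

theorem StarShapedWith.centre_mem {z : Vec r} {S : Set (Vec r)} (h : StarShapedWith z S)
    {x : Vec r} (hx : x ∈ S) : z ∈ S := by
  simpa using h x hx 0 (left_mem_Icc.mpr zero_le_one)

theorem StarShapedWith.smul_mem {S : Set (Vec r)} (h : StarShapedWith 0 S) {x : Vec r}
    (hx : x ∈ S) {t : ℝ} (ht : t ∈ Icc (0 : ℝ) 1) : t • x ∈ S := by
  simpa using h x hx t ht

end General

/-- Along the segment from `u` to `w`, `f` is affine in the parameter. -/
theorem Convex.linearMap_eq_of_eventually_eq {E : Type*} [AddCommGroup E] [Module ℝ E]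
    [TopologicalSpace E] [ContinuousAdd E] [ContinuousSMul ℝ E] {σ : Set E} (hσ : Convex ℝ σ)
    {u : E} (hu : u ∈ σ) (f : E →ₗ[ℝ] ℝ) (h : ∀ᶠ x in 𝓝[σ] u, f x = f u) :
    ∀ w ∈ σ, f w = f u := by
  intro w hw
  have hseg : Tendsto (fun s : ℝ => u + s • (w - u)) (𝓝[>] 0) (𝓝[σ] u) := by
    refine tendsto_nhdsWithin_iff.mpr ⟨?_, ?_⟩
    · have : Continuous fun s : ℝ => u + s • (w - u) := by fun_prop
      simpa using (this.tendsto 0).mono_left nhdsWithin_le_nhds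
    · filter_upwards [Ioc_mem_nhdsGT zero_lt_one] with s hs
      simpa [add_comm] using hσ.add_smul_sub_mem hu hw ⟨hs.1.le, hs.2⟩
  obtain ⟨s, hfs, hs⟩ := ((hseg.eventually h).and self_mem_nhdsWithin).exists
  simp only [map_add, map_smul, map_sub, smul_eq_mul, add_eq_left, mul_eq_zero] at hfs
  exact sub_eq_zero.mp (hfs.resolve_left (ne_of_gt hs))

def intIcc (p : ℤ × ℤ) : Set ℝ := Icc (p.1 : ℝ) p.2

def intIccFaces (p : ℤ × ℤ) : List (ℤ × ℤ) := [p, (p.1, p.1), (p.2, p.2)]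

def IsMaxLevelSet (K A : Set ℝ) (a m : ℝ) : Prop :=
  (∀ y ∈ K, a * y ≤ m) ∧ A = {y ∈ K | a * y = m}

theorem mem_intIccFaces {p r : ℤ × ℤ} :
    r ∈ intIccFaces p ↔ r = p ∨ r = (p.1, p.1) ∨ r = (p.2, p.2) := by
  simp [intIccFaces]

theorem intIcc_nonempty {p r : ℤ × ℤ} (hp : p.1 ≤ p.2) (hr : r ∈ intIccFaces p) :
    (intIcc r).Nonempty := by
  rcases mem_intIccFaces.mp hr with rfl | rfl | rfl
  · exact nonempty_Icc.mpr (by exact_mod_cast hp)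
  all_goals exact nonempty_Icc.mpr le_rfl

theorem isMaxLevelSet_of_mem_intIccFaces {p r : ℤ × ℤ} (hp : p.1 ≤ p.2)
    (hr : r ∈ intIccFaces p) : ∃ a m, IsMaxLevelSet (intIcc p) (intIcc r) a m := by
  have hp' : (p.1 : ℝ) ≤ p.2 := by exact_mod_cast hp
  rcases mem_intIccFaces.mp hr with rfl | rfl | rfl
  · exact ⟨0, 0, fun _ _ => by simp, by ext; simp⟩
  · refine ⟨-1, -p.1, fun y hy => by linarith [hy.1], ?_⟩
    ext y
    simp only [intIcc, mem_Icc, mem_ofPred_eq]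
    constructor
    · rintro ⟨h₁, h₂⟩; exact ⟨⟨h₁, by linarith⟩, by linarith⟩
    · rintro ⟨⟨h₁, -⟩, h₂⟩; exact ⟨h₁, by linarith⟩
  · refine ⟨1, p.2, fun y hy => by linarith [hy.2], ?_⟩
    ext y
    simp only [intIcc, mem_Icc, mem_ofPred_eq]
    constructor
    · rintro ⟨h₁, h₂⟩; exact ⟨⟨by linarith, h₂⟩, by linarith⟩
    · rintro ⟨⟨-, h₁⟩, h₂⟩; exact ⟨by linarith, h₁⟩

theorem exists_mem_intIccFaces_isMaxLevelSet {p : ℤ × ℤ} (hp : p.1 ≤ p.2) (a : ℝ) :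
    ∃ m, ∃ r ∈ intIccFaces p, IsMaxLevelSet (intIcc p) (intIcc r) a m := by
  have hp' : (p.1 : ℝ) ≤ p.2 := by exact_mod_cast hp
  rcases lt_trichotomy a 0 with ha | rfl | ha
  · refine ⟨a * p.1, (p.1, p.1), by simp [intIccFaces], fun y hy => by nlinarith [hy.1], ?_⟩
    ext y
    simp only [intIcc, mem_Icc, mem_ofPred_eq, mul_right_inj' ha.ne]
    constructor
    · rintro ⟨h₁, h₂⟩; exact ⟨⟨h₁, by linarith⟩, by linarith⟩
    · rintro ⟨⟨h₁, -⟩, rfl⟩; exact ⟨h₁, h₁⟩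
  · exact ⟨0, p, by simp [intIccFaces], fun _ _ => by simp, by ext; simp⟩
  · refine ⟨a * p.2, (p.2, p.2), by simp [intIccFaces], fun y hy => by nlinarith [hy.2], ?_⟩
    ext y
    simp only [intIcc, mem_Icc, mem_ofPred_eq, mul_right_inj' ha.ne']
    constructor
    · rintro ⟨h₁, h₂⟩; exact ⟨⟨by linarith, h₂⟩, by linarith⟩
    · rintro ⟨⟨-, h₁⟩, rfl⟩; exact ⟨h₁, h₁⟩

theorem linearMap_apply_vec_two (g : Vec 2 →ₗ[ℝ] ℝ) (x : Vec 2) :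
    g x = g ![1, 0] * x 0 + g ![0, 1] * x 1 := by
  have hx : x = x 0 • ![1, 0] + x 1 • ![0, 1] := by
    ext i; fin_cases i <;> simp
  conv_lhs => rw [hx]
  simp only [map_add, map_smul, smul_eq_mul]
  ring

theorem IsMaxLevelSet.setOf_prod_eq {K L A B : Set ℝ} {a b m n : ℝ}
    (hA : IsMaxLevelSet K A a m) (hB : IsMaxLevelSet L B b n) :
    {x : Vec 2 | x 0 ∈ A ∧ x 1 ∈ B} =
      {x | (x 0 ∈ K ∧ x 1 ∈ L) ∧ a * x 0 + b * x 1 = m + n} := by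
  obtain ⟨hAle, rfl⟩ := hA
  obtain ⟨hBle, rfl⟩ := hB
  ext x
  simp only [mem_ofPred_eq]
  constructor
  · rintro ⟨⟨hx₀, hm⟩, hx₁, hn⟩
    exact ⟨⟨hx₀, hx₁⟩, by rw [hm, hn]⟩
  · rintro ⟨⟨hx₀, hx₁⟩, hsum⟩
    have := hAle _ hx₀
    have := hBle _ hx₁
    exact ⟨⟨hx₀, by linarith⟩, hx₁, by linarith⟩

theorem isFaceOf_setOf_prod {K L A B : Set ℝ} {a b m n : ℝ} (hA : IsMaxLevelSet K A a m)
    (hB : IsMaxLevelSet L B b n) :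
    IsFaceOf {x : Vec 2 | x 0 ∈ A ∧ x 1 ∈ B} {x | x 0 ∈ K ∧ x 1 ∈ L} := by
  refine Or.inr ⟨a • LinearMap.proj 0 + b • LinearMap.proj 1, m + n, fun x hx => ?_, ?_⟩
  · simpa using add_le_add (hA.1 _ hx.1) (hB.1 _ hx.2)
  · rw [hA.setOf_prod_eq hB]
    rfl

def intBox (d : (ℤ × ℤ) × (ℤ × ℤ)) : Set (Vec 2) := {x | x 0 ∈ intIcc d.1 ∧ x 1 ∈ intIcc d.2}

theorem isPolyhedron_intBox (d : (ℤ × ℤ) × (ℤ × ℤ)) : IsPolyhedron (intBox d) := by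
  refine ⟨4, ![-LinearMap.proj 0, LinearMap.proj 0, -LinearMap.proj 1, LinearMap.proj 1],
    ![-d.1.1, d.1.2, -d.2.1, d.2.2], ?_⟩
  ext x
  simp [intBox, intIcc, Fin.forall_fin_succ, and_assoc]

theorem isFaceOf_intBox {d : (ℤ × ℤ) × (ℤ × ℤ)} (h₁ : d.1.1 ≤ d.1.2) (h₂ : d.2.1 ≤ d.2.2)
    {r₁ r₂ : ℤ × ℤ} (hr₁ : r₁ ∈ intIccFaces d.1) (hr₂ : r₂ ∈ intIccFaces d.2) :
    IsFaceOf (intBox (r₁, r₂)) (intBox d) := by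
  obtain ⟨a, m, hA⟩ := isMaxLevelSet_of_mem_intIccFaces h₁ hr₁
  obtain ⟨b, n, hB⟩ := isMaxLevelSet_of_mem_intIccFaces h₂ hr₂
  exact isFaceOf_setOf_prod hA hB

/-- A linear functional is maximised on a box exactly on the product of its coordinatewise
maximisers. -/
theorem eq_empty_or_eq_intBox_of_isFaceOf {d : (ℤ × ℤ) × (ℤ × ℤ)} (h₁ : d.1.1 ≤ d.1.2)
    (h₂ : d.2.1 ≤ d.2.2) {τ : Set (Vec 2)} (hτ : IsFaceOf τ (intBox d)) :
    τ = ∅ ∨ ∃ r₁ ∈ intIccFaces d.1, ∃ r₂ ∈ intIccFaces d.2, τ = intBox (r₁, r₂) := by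
  rcases hτ with rfl | ⟨g, c, hle, rfl⟩
  · exact Or.inr ⟨d.1, by simp [intIccFaces], d.2, by simp [intIccFaces], rfl⟩
  obtain ⟨m, r₁, hr₁, hA⟩ := exists_mem_intIccFaces_isMaxLevelSet h₁ (g ![1, 0])
  obtain ⟨n, r₂, hr₂, hB⟩ := exists_mem_intIccFaces_isMaxLevelSet h₂ (g ![0, 1])
  have hg : ∀ x, g x = g ![1, 0] * x 0 + g ![0, 1] * x 1 := linearMap_apply_vec_two g
  have hcorner : m + n ≤ c := by
    obtain ⟨y₁, hy₁⟩ := intIcc_nonempty h₁ hr₁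
    obtain ⟨y₂, hy₂⟩ := intIcc_nonempty h₂ hr₂
    have hy : ![y₁, y₂] ∈ intBox (r₁, r₂) := by simpa [intBox] using ⟨hy₁, hy₂⟩
    rw [intBox, hA.setOf_prod_eq hB] at hy
    have := hle _ hy.1
    rwa [hg, hy.2] at this
  rcases hcorner.eq_or_lt with rfl | hlt
  · refine Or.inr ⟨r₁, hr₁, r₂, hr₂, ?_⟩
    ext x
    rw [mem_sep_iff, hg x, show intBox (r₁, r₂) = _ from hA.setOf_prod_eq hB]
    rfl
  · refine Or.inl (eq_empty_of_forall_notMem fun x ⟨hx, hgx⟩ => ?_)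
    have := hA.1 _ hx.1
    have := hB.1 _ hx.2
    linarith [hg x]

def intIccInter (p q : ℤ × ℤ) : ℤ × ℤ := (max p.1 q.1, min p.2 q.2)

theorem intBox_inter_intBox (d d' : (ℤ × ℤ) × (ℤ × ℤ)) :
    intBox d ∩ intBox d' = intBox (intIccInter d.1 d'.1, intIccInter d.2 d'.2) := by
  have hIcc (p q : ℤ × ℤ) : intIcc p ∩ intIcc q = intIcc (intIccInter p q) := by
    simp [intIcc, intIccInter, Icc_inter_Icc]
  ext x
  simp only [intBox, mem_inter_iff, mem_ofPred_eq, ← hIcc]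
  tauto

theorem intBox_eq_empty {d : (ℤ × ℤ) × (ℤ × ℤ)} (h : d.1.2 < d.1.1 ∨ d.2.2 < d.2.1) :
    intBox d = ∅ := by
  refine eq_empty_of_forall_notMem fun x ⟨⟨h₁, h₁'⟩, h₂, h₂'⟩ => ?_
  rcases h with h | h
  · exact (Int.cast_lt.mpr h).not_ge (h₁.trans h₁')
  · exact (Int.cast_lt.mpr h).not_ge (h₂.trans h₂')

/-- A decidable criterion for `∅` and the boxes of `L` to form a polyhedral complex. -/
def IsBoxComplex (L : List ((ℤ × ℤ) × (ℤ × ℤ))) : Prop :=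
  ∀ d ∈ L, d.1.1 ≤ d.1.2 ∧ d.2.1 ≤ d.2.2 ∧
    (∀ r₁ ∈ intIccFaces d.1, ∀ r₂ ∈ intIccFaces d.2, (r₁, r₂) ∈ L) ∧
    ∀ d' ∈ L, (intIccInter d.1 d'.1).2 < (intIccInter d.1 d'.1).1 ∨
      (intIccInter d.2 d'.2).2 < (intIccInter d.2 d'.2).1 ∨
      (intIccInter d.1 d'.1 ∈ intIccFaces d.1 ∧ intIccInter d.2 d'.2 ∈ intIccFaces d.2)

def boxComplex (L : List ((ℤ × ℤ) × (ℤ × ℤ))) (hL : IsBoxComplex L) : PolyComplex 2 where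
  polys := insert ∅ (intBox '' {d | d ∈ L})
  finite := (L.finite_toSet.image intBox).insert ∅
  poly_mem := by
    rintro σ (rfl | ⟨d, -, rfl⟩)
    exacts [isPolyhedron_empty, isPolyhedron_intBox d]
  face_mem := by
    rintro σ (rfl | ⟨d, hd, rfl⟩) τ hτ
    · exact Or.inl (subset_empty_iff.mp hτ.subset)
    obtain ⟨h₁, h₂, hfaces, -⟩ := hL d hd
    rcases eq_empty_or_eq_intBox_of_isFaceOf h₁ h₂ hτ with rfl | ⟨r₁, hr₁, r₂, hr₂, rfl⟩
    exacts [Or.inl rfl, Or.inr ⟨_, hfaces r₁ hr₁ r₂ hr₂, rfl⟩]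
  inter_face := by
    rintro σ (rfl | ⟨d, hd, rfl⟩) τ (rfl | ⟨d', hd', rfl⟩)
    · rw [inter_self]; exact isFaceOf_empty _
    · rw [empty_inter]; exact isFaceOf_empty _
    · rw [inter_empty]; exact isFaceOf_empty _
    obtain ⟨h₁, h₂, -, hinter⟩ := hL d hd
    rw [intBox_inter_intBox]
    rcases hinter d' hd' with h | h | ⟨hr₁, hr₂⟩
    · rw [intBox_eq_empty (Or.inl h)]; exact isFaceOf_empty _
    · rw [intBox_eq_empty (Or.inr h)]; exact isFaceOf_empty _
    · exact isFaceOf_intBox h₁ h₂ hr₁ hr₂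

theorem boxComplex_support (L : List ((ℤ × ℤ) × (ℤ × ℤ))) (hL : IsBoxComplex L) :
    (boxComplex L hL).support = ⋃ d ∈ L, intBox d := by
  rw [PolyComplex.support, boxComplex, biUnion_insert, biUnion_image, empty_union]
  rfl

def spikedSquare : Set (Vec 2) :=
  {x | (|x 0| ≤ 1 ∧ |x 1| ≤ 1) ∨ (x 0 = 0 ∧ x 1 ∈ Icc (1 : ℝ) 2) ∨
    (x 1 = 0 ∧ x 0 ∈ Icc (1 : ℝ) 2)}

def halvedIntervalCells : List (ℤ × ℤ) := [(-1, 0), (0, 1), (-1, -1), (0, 0), (1, 1)]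

def spikedSquareCells : List ((ℤ × ℤ) × (ℤ × ℤ)) :=
  halvedIntervalCells ×ˢ halvedIntervalCells ++
    [((0, 0), (1, 2)), ((0, 0), (2, 2)), ((1, 2), (0, 0)), ((2, 2), (0, 0))]

theorem isBoxComplex_spikedSquareCells : IsBoxComplex spikedSquareCells := by
  unfold IsBoxComplex; decide

theorem exists_halvedIntervalCells_mem {y : ℝ} (hy : |y| ≤ 1) :
    ∃ p ∈ halvedIntervalCells, y ∈ intIcc p := by
  rw [abs_le] at hy
  rcases le_total y 0 with h | h
  · exact ⟨(-1, 0), by decide, by simpa [intIcc] using ⟨hy.1, h⟩⟩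
  · exact ⟨(0, 1), by decide, by simpa [intIcc] using ⟨h, hy.2⟩⟩

theorem intBox_mono {d e : (ℤ × ℤ) × (ℤ × ℤ)}
    (h : e.1.1 ≤ d.1.1 ∧ d.1.2 ≤ e.1.2 ∧ e.2.1 ≤ d.2.1 ∧ d.2.2 ≤ e.2.2) :
    intBox d ⊆ intBox e := by
  obtain ⟨h₁, h₁', h₂, h₂'⟩ := h
  rintro x ⟨⟨hx₁, hx₁'⟩, hx₂, hx₂'⟩
  exact ⟨⟨le_trans (by exact_mod_cast h₁) hx₁, hx₁'.trans (by exact_mod_cast h₁')⟩,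
    le_trans (by exact_mod_cast h₂) hx₂, hx₂'.trans (by exact_mod_cast h₂')⟩

theorem intBox_subset_spikedSquare {d : (ℤ × ℤ) × (ℤ × ℤ)} (hd : d ∈ spikedSquareCells) :
    intBox d ⊆ spikedSquare := by
  have hcover : ∃ e ∈ [((-1, 1), (-1, 1)), ((0, 0), (1, 2)), ((1, 2), (0, 0))],
      e.1.1 ≤ d.1.1 ∧ d.1.2 ≤ e.1.2 ∧ e.2.1 ≤ d.2.1 ∧ d.2.2 ≤ e.2.2 := by
    revert d; decide
  obtain ⟨e, he, hde⟩ := hcover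
  refine (intBox_mono hde).trans fun x ⟨⟨h₁, h₁'⟩, h₂, h₂'⟩ => ?_
  simp only [List.mem_cons, List.not_mem_nil, or_false] at he
  rcases he with rfl | rfl | rfl <;> norm_num at h₁ h₁' h₂ h₂'
  · exact Or.inl ⟨abs_le.mpr ⟨h₁, h₁'⟩, abs_le.mpr ⟨h₂, h₂'⟩⟩
  · exact Or.inr (Or.inl ⟨le_antisymm h₁' h₁, h₂, h₂'⟩)
  · exact Or.inr (Or.inr ⟨le_antisymm h₂' h₂, h₁, h₁'⟩)

theorem spikedSquare_eq_biUnion : spikedSquare = ⋃ d ∈ spikedSquareCells, intBox d := by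
  refine subset_antisymm ?_ (iUnion₂_subset fun d hd => intBox_subset_spikedSquare hd)
  rintro x (⟨h₀, h₁⟩ | ⟨h₀, h₁⟩ | ⟨h₁, h₀⟩)
  · obtain ⟨p, hp, hxp⟩ := exists_halvedIntervalCells_mem h₀
    obtain ⟨q, hq, hxq⟩ := exists_halvedIntervalCells_mem h₁
    exact mem_biUnion (List.mem_append_left _ (List.mem_product.mpr ⟨hp, hq⟩)) ⟨hxp, hxq⟩
  · exact mem_biUnion (by decide : ((0, 0), (1, 2)) ∈ spikedSquareCells)
      ⟨by simp [intIcc, h₀], by simpa [intIcc] using h₁⟩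
  · exact mem_biUnion (by decide : ((1, 2), (0, 0)) ∈ spikedSquareCells)
      ⟨by simpa [intIcc] using h₀, by simp [intIcc, h₁]⟩

theorem spikedSquare_eq_support :
    spikedSquare = (boxComplex spikedSquareCells isBoxComplex_spikedSquareCells).support := by
  rw [boxComplex_support, spikedSquare_eq_biUnion]

theorem isCompact_spikedSquare : IsCompact spikedSquare := by
  refine (isCompact_Icc (a := (-2 : Vec 2)) (b := 2)).of_isClosed_subset
    (spikedSquare_eq_support ▸ PolyComplex.isClosed_support _) fun x hx => ?_
  have hbound : ∀ i, |x i| ≤ 2 := by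
    rw [Fin.forall_fin_two]
    rcases hx with ⟨h₀, h₁⟩ | ⟨h₀, h₁, h₁'⟩ | ⟨h₁, h₀, h₀'⟩
    · exact ⟨by linarith, by linarith⟩
    · exact ⟨by simp [h₀], abs_le.mpr ⟨by linarith, h₁'⟩⟩
    · exact ⟨abs_le.mpr ⟨by linarith, h₀'⟩, by simp [h₁]⟩
  exact ⟨fun i => by simpa using (abs_le.mp (hbound i)).1, fun i => (abs_le.mp (hbound i)).2⟩

theorem starShapedWith_spikedSquare : StarShapedWith 0 spikedSquare := by
  rintro x hx t ⟨ht₀, ht₁⟩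
  have hscale : ∀ y : ℝ, |t * y| ≤ |y| := fun y => by
    rw [abs_mul, abs_of_nonneg ht₀]; exact mul_le_of_le_one_left (abs_nonneg y) ht₁
  simp only [spikedSquare, mem_Icc, mem_ofPred_eq, sub_zero, zero_add, Pi.smul_apply,
    smul_eq_mul] at hx ⊢
  rcases hx with ⟨h₀, h₁⟩ | ⟨h₀, h₁, h₁'⟩ | ⟨h₁, h₀, h₀'⟩
  · exact Or.inl ⟨(hscale _).trans h₀, (hscale _).trans h₁⟩
  · rcases le_or_gt (t * x 1) 1 with h | h
    · exact Or.inl ⟨by simp [h₀], abs_le.mpr ⟨by nlinarith, h⟩⟩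
    · exact Or.inr (Or.inl ⟨by simp [h₀], h.le, by nlinarith⟩)
  · rcases le_or_gt (t * x 0) 1 with h | h
    · exact Or.inl ⟨abs_le.mpr ⟨by nlinarith, h⟩, by simp [h₁]⟩
    · exact Or.inr (Or.inr ⟨by simp [h₁], h.le, by nlinarith⟩)

theorem spikedSquare_apply_zero_of_one_lt {x : Vec 2} (hx : x ∈ spikedSquare) (h : 1 < x 1) :
    x 0 = 0 := by
  rcases hx with ⟨-, h₁⟩ | ⟨h₀, -⟩ | ⟨h₁, -⟩
  · linarith [le_abs_self (x 1)]
  · exact h₀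
  · linarith

theorem tip_mem_spikedSquare : (![0, 2] : Vec 2) ∈ spikedSquare :=
  Or.inr (Or.inl ⟨rfl, by norm_num⟩)

/-- Since `spikedSquare` is open in `|D|`, near the tip `(0, 2)` the support of `D` is the
vertical spike. -/
theorem apply_zero_eq_zero_of_tip_mem {D : PolyComplex 2} {U : Set (Vec 2)} (hU : IsOpen U)
    (hΩ : spikedSquare = U ∩ D.support) {σ : Set (Vec 2)} (hσ : σ ∈ D.polys)
    (htip : (![0, 2] : Vec 2) ∈ σ) : ∀ w ∈ σ, w 0 = 0 := by
  have hnhds : U ∩ {x | 1 < x 1} ∈ 𝓝 (![0, 2] : Vec 2) := by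
    refine inter_mem (hU.mem_nhds ?_) ((isOpen_lt continuous_const (continuous_apply 1)).mem_nhds
      (by norm_num))
    exact (hΩ ▸ tip_mem_spikedSquare).1
  have hloc : ∀ᶠ x in 𝓝[σ] (![0, 2] : Vec 2), x 0 = 0 := by
    filter_upwards [inter_mem_nhdsWithin σ hnhds] with x ⟨hxσ, hxU, hx₁⟩
    exact spikedSquare_apply_zero_of_one_lt (hΩ ▸ ⟨hxU, mem_biUnion hσ hxσ⟩) hx₁
  simpa using (D.poly_mem σ hσ).convex.linearMap_eq_of_eventually_eq htip (LinearMap.proj 0)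
    (by simpa using hloc)

theorem setOf_apply_zero_eq_zero_subset_affineSpan :
    {w : Vec 2 | w 0 = 0} ⊆ affineSpan ℝ {0, (![0, 1] : Vec 2)} := by
  intro w hw
  have hw : w = AffineMap.lineMap 0 ![0, 1] (w 1) := by
    ext i
    fin_cases i <;> simp [AffineMap.lineMap_apply, hw.out]
  exact hw ▸ AffineMap.lineMap_mem_affineSpan_pair _ _ _

theorem not_polyStarShaped_spikedSquare : ¬ PolyStarShaped 0 spikedSquare := by
  rintro ⟨D, ⟨U, hU, hΩ⟩, hstar⟩
  have hsupp : spikedSquare ⊆ D.support := hΩ ▸ inter_subset_right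
  have hmid : (![0, 1] : Vec 2) ∈ spikedSquare := Or.inl (by simp)
  have htop : (fun s : ℝ => (![s, 1] : Vec 2)) '' Ioc 0 1 ⊆ spikedSquare := by
    rintro _ ⟨s, hs, rfl⟩
    exact Or.inl ⟨by simp [abs_of_pos hs.1, hs.2], by simp⟩
  obtain ⟨σ, hσ, htipσ⟩ := D.exists_isMaximal_mem (hsupp tip_mem_spikedSquare)
  have hσline := apply_zero_eq_zero_of_tip_mem hU hΩ hσ.1 htipσ
  have h0σ : (0 : Vec 2) ∈ σ := ((hstar σ hσ.1 hσ.2).centre_mem ⟨htipσ, tip_mem_spikedSquare⟩).1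
  have hmidσ : (![0, 1] : Vec 2) ∈ σ := by
    have := ((hstar σ hσ.1 hσ.2).smul_mem ⟨htipσ, tip_mem_spikedSquare⟩
      (t := 1 / 2) (by norm_num)).1
    convert this using 1
    ext i; fin_cases i <;> norm_num
  have hedge : (![0, 1] : Vec 2) ∈ closure ((fun s : ℝ => (![s, 1] : Vec 2)) '' Ioc 0 1) :=
    mem_closure_image (by fun_prop) (by simp [closure_Ioc zero_ne_one])
  obtain ⟨ρ, hρ, hmidρ, _, ⟨hpρ, s, hs, rfl⟩⟩ := D.exists_isMaximal_mem_of_mem_closure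
    (htop.trans hsupp) hedge
  have h0ρ : (0 : Vec 2) ∈ ρ := ((hstar ρ hρ.1 hρ.2).centre_mem ⟨hmidρ, hmid⟩).1
  have hσρ : σ ∩ ρ = σ := (D.inter_face σ hσ.1 ρ hρ.1).eq_of_subset_affineSpan fun w hw =>
    affineSpan_mono ℝ (pair_subset (s := σ ∩ ρ) ⟨h0σ, h0ρ⟩ ⟨hmidσ, hmidρ⟩)
      (setOf_apply_zero_eq_zero_subset_affineSpan (hσline w hw))
  have hs₀ := apply_zero_eq_zero_of_tip_mem hU hΩ hρ.1 (hσρ ▸ htipσ).2 _ hpρ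
  exact hs.1.ne' (by simpa using hs₀)

/-- The compact set
`Ω = [−1,1]×[−1,1] ∪ {0}×[1,2] ∪ [1,2]×{0} ⊆ ℝ²` is the support of a polyhedral
complex and is star shaped with centre the origin, but it is not polyhedrally star
shaped with centre the origin. -/
theorem starShaped_not_polyStarShaped :
    ∃ Ω : Set (Vec 2),
      Ω = {x : Vec 2 | (|x 0| ≤ 1 ∧ |x 1| ≤ 1) ∨
            (x 0 = 0 ∧ x 1 ∈ Icc (1 : ℝ) 2) ∨
            (x 1 = 0 ∧ x 0 ∈ Icc (1 : ℝ) 2)} ∧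
      IsCompact Ω ∧
      (∃ C : PolyComplex 2, Ω = C.support) ∧
      StarShapedWith (0 : Vec 2) Ω ∧
      ¬ PolyStarShaped (0 : Vec 2) Ω :=
  ⟨spikedSquare, rfl, isCompact_spikedSquare, ⟨_, spikedSquare_eq_support⟩,
    starShapedWith_spikedSquare, not_polyStarShaped_spikedSquare⟩
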